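/- arXiv:1607.04681 — 3 statements merged into one kernel-verified Lean document; each statement's English description precedes it below -/
import Mathlib

section
/- For every real number t with 0 < t < 1, the closed interval [t, t + 4t²] intersects the union ⋃_{n≥1} ⋃_{k=0}^{2^n - 1} A_{n,k}. -/
open Filter Topology MeasureTheory
open scoped NNReal ENNReal

noncomputable section

/-- The underlying space of the first Heisenberg group: `ℝ³`. -/
abbrev Heis : Type := ℝ × ℝ × ℝ

/-- Heisenberg group multiplication:
`(x,y,t)·(x',y',t') = (x+x', y+y', t+t' − 2(xy' − yx'))`. -/
def hmul (p q : Heis) : Heis :=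
  (p.1 + q.1, p.2.1 + q.2.1, p.2.2 + q.2.2 - 2 * (p.1 * q.2.1 - p.2.1 * q.1))

/-- Heisenberg group inverse: `(x,y,t)⁻¹ = (−x,−y,−t)`. -/
def hinv (p : Heis) : Heis := (-p.1, -p.2.1, -p.2.2)

/-- Koranyi norm: `‖(x,y,t)‖ = ((x²+y²)² + t²)^(1/4)`. -/
def knorm (p : Heis) : ℝ := ((p.1 ^ 2 + p.2.1 ^ 2) ^ 2 + p.2.2 ^ 2) ^ ((1 : ℝ) / 4)

/-- Koranyi distance: `d_k(a,b) = ‖a⁻¹·b‖_k`. -/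
def dk (p q : Heis) : ℝ := knorm (hmul (hinv p) q)

/-- Euclidean distance on `ℝ³`. -/
def de (p q : Heis) : ℝ :=
  Real.sqrt ((p.1 - q.1) ^ 2 + (p.2.1 - q.2.1) ^ 2 + (p.2.2 - q.2.2) ^ 2)

/-- Dilation `δ_r(x,y,t) = (rx, ry, r²t)`. -/
def hdil (r : ℝ) (p : Heis) : Heis := (r * p.1, r * p.2.1, r ^ 2 * p.2.2)

/-- Open ball with respect to a distance function `d`. -/
def ballD {M : Type*} (d : M → M → ℝ) (x : M) (r : ℝ) : Set M := {y | d x y < r}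

/-- `E` is `lam`-porous at `a` with respect to the distance function `d`: there are points
`x n` converging to `a` such that `B(x n, lam * d(x n, a))` misses `E`. -/
def PorousAtD {M : Type*} (d : M → M → ℝ) (lam : ℝ) (E : Set M) (a : M) : Prop :=
  ∃ x : ℕ → M, Tendsto (fun n => d (x n) a) atTop (𝓝 0) ∧
    ∀ n, ballD d (x n) (lam * d (x n) a) ∩ E = ∅

/-- `E` is porous w.r.t. `d`: a single `lam ∈ (0,1)` works at every point of `E`. -/
def PorousD {M : Type*} (d : M → M → ℝ) (E : Set M) : Prop :=
  ∃ lam : ℝ, 0 < lam ∧ lam < 1 ∧ ∀ a ∈ E, PorousAtD d lam E a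

/-- `E` is σ-porous w.r.t. `d`: a countable union of porous sets. -/
def SigmaPorousD {M : Type*} (d : M → M → ℝ) (E : Set M) : Prop :=
  ∃ f : ℕ → Set M, (∀ n, PorousD d (f n)) ∧ E = ⋃ n, f n

/-- The translated dilated Cantor set `A_{n,k} = 2⁻ⁿ + k·2⁻²ⁿ + 2⁻²ⁿ·C`. -/
def Acantor (n k : ℕ) : Set ℝ :=
  (fun c => (2:ℝ) ^ (-(n:ℤ)) + (k : ℝ) * (2:ℝ) ^ (-(2*n:ℤ)) + (2:ℝ) ^ (-(2*n:ℤ)) * c) ''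
    cantorSet

/-- `|(x,y)|` for `p = (x,y,t)`. -/
def normxy (p : Heis) : ℝ := Real.sqrt (p.1 ^ 2 + p.2.1 ^ 2)

/-- `{0} ∪ ⋃_{n≥1} ⋃_{0 ≤ k ≤ 2ⁿ−1} {p : |(x,y)| ∈ A_{n,k}}`. -/
def cantorUnion : Set Heis :=
  {(0 : Heis)} ∪
    ⋃ (n : ℕ) (_ : 1 ≤ n) (k : ℕ) (_ : k < 2 ^ n), {p : Heis | normxy p ∈ Acantor n k}

/-- The cone `Λ = {(x,y,t) : |t| ≤ |(x,y)|}`. -/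
def LambdaCone : Set Heis := {p : Heis | |p.2.2| ≤ normxy p}

/-- The set `P_e = Λ ∩ ({0} ∪ ⋃ A_{n,k}-cylinders)`. -/
def Pe : Set Heis := LambdaCone ∩ cantorUnion

/-- The cusp `Υ = {(x,y,t) : |t| ≥ 2|(x,y)|²}`. -/
def UpsilonCusp : Set Heis := {p : Heis | 2 * normxy p ^ 2 ≤ |p.2.2|}

/-- The set `P_c = Υ ∩ ({0} ∪ ⋃ A_{n,k}-cylinders)`. -/
def Pc : Set Heis := UpsilonCusp ∩ cantorUnion

/-- `L : H¹ → ℝ` is group linear: additive on the group and homogeneous for dilations. -/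
def GroupLinear (L : Heis → ℝ) : Prop :=
  (∀ p q, L (hmul p q) = L p + L q) ∧ ∀ r : ℝ, 0 < r → ∀ p, L (hdil r p) = r * L p

/-- Pansu differentiability of `f : H¹ → ℝ` at `x₀`. -/
def PansuDiffAt (f : Heis → ℝ) (x₀ : Heis) : Prop :=
  ∃ L : Heis → ℝ, GroupLinear L ∧
    Tendsto (fun h => (f (hmul x₀ h) - f x₀ - L h) / dk h 0) (𝓝[≠] (0 : Heis)) (𝓝 0)

/-- Pansu subdifferentiability of `f : H¹ → ℝ` at `x₀`:
`liminf_{h→0} (f(x₀h) − f(x₀) − L(h))/d_k(h) ≥ 0` for some group linear `L`. -/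
def PansuSubdiffAt (f : Heis → ℝ) (x₀ : Heis) : Prop :=
  ∃ L : Heis → ℝ, GroupLinear L ∧ ∀ ε : ℝ, 0 < ε →
    ∀ᶠ h in 𝓝[≠] (0 : Heis), -ε < (f (hmul x₀ h) - f x₀ - L h) / dk h 0

/-- Subdifferentiability of `F : ℝ → ℝ` at `a`:
`liminf_{t→0} (F(a+t) − F(a) − ℓt)/|t| ≥ 0` for some `ℓ ∈ ℝ`. -/
def RSubdiffAt (F : ℝ → ℝ) (a : ℝ) : Prop :=
  ∃ l : ℝ, ∀ ε : ℝ, 0 < ε →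
    ∀ᶠ t in 𝓝[≠] (0 : ℝ), -ε < (F (a + t) - F a - l * t) / |t|

/-- `f` is Lipschitz with respect to the Koranyi distance. -/
def DkLipschitz (f : Heis → ℝ) : Prop :=
  ∃ K : ℝ, 0 ≤ K ∧ ∀ p q, |f p - f q| ≤ K * dk p q

/-- The first horizontal derivative `X₁f(p)` has value `d`. -/
def HDeriv1 (f : Heis → ℝ) (p : Heis) (d : ℝ) : Prop :=
  Tendsto (fun s : ℝ => (f (hmul p (s, 0, 0)) - f p) / s) (𝓝[≠] (0 : ℝ)) (𝓝 d)

/-- The second horizontal derivative `X₂f(p)` has value `d`. -/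
def HDeriv2 (f : Heis → ℝ) (p : Heis) (d : ℝ) : Prop :=
  Tendsto (fun s : ℝ => (f (hmul p (0, s, 0)) - f p) / s) (𝓝[≠] (0 : ℝ)) (𝓝 d)
/-! The points `2⁻ⁿ + k·2⁻²ⁿ` with `0 ≤ k ≤ 2ⁿ` are endpoints of the sets `A_{n,k}` (using `0, 1 ∈ C`)
and form a grid of mesh `2⁻²ⁿ` on `[2⁻ⁿ, 2·2⁻ⁿ]`. Choosing `n` with `2⁻ⁿ ≤ t < 2·2⁻ⁿ`, some grid point
lies in `[t, t + 2⁻²ⁿ] ⊆ [t, t + t²]`. -/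

lemma one_mem_cantorSet : (1 : ℝ) ∈ cantorSet := by
  refine Set.mem_iInter.mpr fun n => ?_
  induction n with
  | zero => simp [preCantorSet]
  | succ n ih => exact Or.inr ⟨1, ih, by norm_num⟩

lemma left_mem_Acantor (n k : ℕ) :
    (2 : ℝ) ^ (-(n : ℤ)) + k * (2 : ℝ) ^ (-(2 * n : ℤ)) ∈ Acantor n k :=
  ⟨0, zero_mem_cantorSet, by simp⟩

lemma right_mem_Acantor (n k : ℕ) :
    (2 : ℝ) ^ (-(n : ℤ)) + (k + 1 : ℕ) * (2 : ℝ) ^ (-(2 * n : ℤ)) ∈ Acantor n k :=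
  ⟨1, one_mem_cantorSet, by push_cast; ring⟩

lemma grid_point_mem_iUnion_Acantor {n : ℕ} (hn : 1 ≤ n) {k : ℕ} (hk : k ≤ 2 ^ n) :
    (2 : ℝ) ^ (-(n : ℤ)) + k * (2 : ℝ) ^ (-(2 * n : ℤ)) ∈
      ⋃ (n : ℕ) (_ : 1 ≤ n) (k : ℕ) (_ : k < 2 ^ n), Acantor n k := by
  simp only [Set.mem_iUnion]
  rcases k with _ | k
  · exact ⟨n, hn, 0, Nat.two_pow_pos n, left_mem_Acantor n 0⟩
  · exact ⟨n, hn, k, hk, right_mem_Acantor n k⟩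

lemma exists_le_grid_point_le_add {a b t : ℝ} (hb : 0 < b) {N : ℕ} (hat : a ≤ t)
    (htN : t ≤ a + N * b) : ∃ k ≤ N, t ≤ a + k * b ∧ a + k * b ≤ t + b := by
  have hx : 0 ≤ (t - a) / b := div_nonneg (sub_nonneg.mpr hat) hb.le
  refine ⟨⌈(t - a) / b⌉₊, Nat.ceil_le.mpr ?_, ?_, ?_⟩
  · rw [div_le_iff₀ hb]; linarith
  · have := (div_le_iff₀ hb).mp (Nat.le_ceil ((t - a) / b)); linarith
  · have := (lt_div_iff₀ hb).mp (by linarith [Nat.ceil_lt_add_one hx] :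
      (⌈(t - a) / b⌉₊ : ℝ) - 1 < (t - a) / b)
    linarith

lemma exists_two_zpow_neg_mem_Ico {t : ℝ} (ht0 : 0 < t) (ht1 : t < 1) :
    ∃ n : ℕ, 1 ≤ n ∧ t ∈ Set.Ico ((2 : ℝ) ^ (-(n : ℤ))) (2 * (2 : ℝ) ^ (-(n : ℤ))) := by
  obtain ⟨e, hle, hlt⟩ := exists_mem_Ico_zpow ht0 one_lt_two
  have he : e < 0 := by
    by_contra! he
    linarith [one_le_zpow₀ (one_le_two : (1 : ℝ) ≤ 2) he]
  obtain ⟨n, rfl⟩ := Int.exists_eq_neg_ofNat he.le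
  refine ⟨n, by omega, hle, ?_⟩
  rwa [zpow_add₀ two_ne_zero, zpow_one, mul_comm] at hlt

/-- For every `0 < t < 1`, the interval `[t, t+4t²]` meets `⋃_{n≥1} ⋃_{0≤k≤2ⁿ−1} A_{n,k}`. -/
theorem stmt_2 (t : ℝ) (ht0 : 0 < t) (ht1 : t < 1) :
    (Set.Icc t (t + 4 * t ^ 2) ∩
      ⋃ (n : ℕ) (_ : 1 ≤ n) (k : ℕ) (_ : k < 2 ^ n), Acantor n k).Nonempty := by
  obtain ⟨n, hn, hle, hlt⟩ := exists_two_zpow_neg_mem_Ico ht0 ht1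
  set a : ℝ := (2 : ℝ) ^ (-(n : ℤ))
  have hsq : (2 : ℝ) ^ (-(2 * n : ℤ)) = a ^ 2 := by
    rw [← zpow_natCast, ← zpow_mul]; ring_nf
  have hmesh : (2 : ℝ) ^ n * a ^ 2 = a := by
    rw [pow_two, ← mul_assoc, ← zpow_natCast, ← zpow_add₀ two_ne_zero, add_neg_cancel, zpow_zero,
      one_mul]
  obtain ⟨k, hk, hyt, hty⟩ :=
    exists_le_grid_point_le_add (b := (2 : ℝ) ^ (-(2 * n : ℤ))) (by positivity) (N := 2 ^ n) hle
      (by push_cast; rw [hsq, hmesh]; linarith)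
  refine ⟨_, ⟨hyt, ?_⟩, grid_point_mem_iUnion_Acantor hn hk⟩
  rw [hsq] at hty
  nlinarith [pow_le_pow_left₀ (by positivity : 0 ≤ a) hle 2]
end
end

section
/- A function f : H¹ → R is Pansu differentiable at a point a ∈ H¹ if and only if both f and −f are Pansu subdifferentiable at a. -/
open Filter Topology MeasureTheory
open scoped NNReal ENNReal

noncomputable section

lemma knorm_nonneg (p : Heis) : 0 ≤ knorm p := Real.rpow_nonneg (by positivity) _

lemma knorm_pos {p : Heis} (hp : p ≠ 0) : 0 < knorm p := by
  apply Real.rpow_pos_of_pos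
  rcases p with ⟨x, y, t⟩
  rcases lt_or_eq_of_le (by positivity : (0:ℝ) ≤ (x ^ 2 + y ^ 2) ^ 2 + t ^ 2) with h | h
  · exact h
  · exfalso
    apply hp
    have hxy : x ^ 2 + y ^ 2 = 0 := by nlinarith [sq_nonneg (x^2+y^2), sq_nonneg t]
    have hx : x = 0 := by nlinarith [sq_nonneg x, sq_nonneg y]
    have hy : y = 0 := by nlinarith [sq_nonneg x, sq_nonneg y]
    have ht : t = 0 := by nlinarith [sq_nonneg t, sq_nonneg (x^2+y^2)]
    simp [Prod.ext_iff, hx, hy, ht]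

lemma dk_zero (p : Heis) : dk p 0 = knorm p := by
  simp only [dk, hmul, hinv, knorm]
  norm_num

lemma dk_zero_pos {p : Heis} (hp : p ≠ 0) : 0 < dk p 0 := by
  rw [dk_zero]; exact knorm_pos hp

lemma knorm_dil {r : ℝ} (hr : 0 < r) (p : Heis) : knorm (hdil r p) = r * knorm p := by
  rcases p with ⟨x, y, t⟩
  simp only [knorm, hdil]
  have h1 : ((r * x) ^ 2 + (r * y) ^ 2) ^ 2 + (r ^ 2 * t) ^ 2
      = r ^ 4 * ((x ^ 2 + y ^ 2) ^ 2 + t ^ 2) := by ring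
  rw [h1, Real.mul_rpow (by positivity) (by positivity)]
  congr 1
  rw [← Real.rpow_natCast r 4, ← Real.rpow_mul hr.le]
  norm_num

lemma hmul_hinv (p : Heis) : hmul p (hinv p) = 0 := by
  simp only [hmul, hinv, Prod.ext_iff]
  norm_num
  ring

lemma gl_zero {L : Heis → ℝ} (hL : GroupLinear L) : L 0 = 0 := by
  have h := hL.1 0 0
  have h0 : hmul 0 0 = (0 : Heis) := by
    simp [hmul, Prod.ext_iff]
  rw [h0] at h
  linarith

lemma gl_hinv {L : Heis → ℝ} (hL : GroupLinear L) (p : Heis) : L (hinv p) = -L p := by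
  have h := hL.1 p (hinv p)
  rw [hmul_hinv, gl_zero hL] at h
  linarith

lemma hdil_ne_zero {r : ℝ} (hr : 0 < r) {p : Heis} (hp : p ≠ 0) : hdil r p ≠ 0 := by
  rcases p with ⟨x, y, t⟩
  simp only [hdil, Prod.ext_iff, ne_eq] at hp ⊢
  intro ⟨h1, h2, h3⟩
  exact hp ⟨by simpa [hr.ne'] using h1, by simpa [hr.ne'] using h2,
    by simpa [pow_ne_zero 2 hr.ne'] using h3⟩

lemma seq_tendsto {p : Heis} (hp : p ≠ 0) :
    Tendsto (fun n : ℕ => hdil (1 / (n + 1 : ℝ)) p) atTop (𝓝[≠] (0 : Heis)) := by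
  rw [tendsto_nhdsWithin_iff]
  constructor
  · have hc : Continuous (fun s : ℝ => hdil s p) := by
      unfold hdil; fun_prop
    have h0 : hdil (0 : ℝ) p = 0 := by simp [hdil, Prod.ext_iff]
    have := (hc.tendsto 0).comp tendsto_one_div_add_atTop_nhds_zero_nat
    rwa [h0] at this
  · filter_upwards with n
    exact hdil_ne_zero (by positivity) hp

/-- `f` is Pansu differentiable at `a` iff both `f` and `−f` are Pansu subdifferentiable
at `a`. -/
theorem stmt_10 (f : Heis → ℝ) (a : Heis) :
    PansuDiffAt f a ↔ (PansuSubdiffAt f a ∧ PansuSubdiffAt (fun x => -f x) a) := by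
  constructor
  · rintro ⟨L, hL, hT⟩
    have hbd : ∀ ε : ℝ, 0 < ε → ∀ᶠ h in 𝓝[≠] (0 : Heis),
        |(f (hmul a h) - f a - L h) / dk h 0| < ε := by
      intro ε hε
      have := Metric.tendsto_nhds.mp hT ε hε
      filter_upwards [this] with h hh
      rwa [Real.dist_eq, sub_zero] at hh
    refine ⟨⟨L, hL, fun ε hε => ?_⟩, ⟨fun h => -L h, ⟨?_, ?_⟩, fun ε hε => ?_⟩⟩
    · filter_upwards [hbd ε hε] with h hh
      have := abs_lt.mp hh
      linarith [this.1]
    · intro p q; show -L (hmul p q) = -L p + -L q; rw [hL.1]; ring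
    · intro r hr p; show -L (hdil r p) = r * -L p; rw [hL.2 r hr]; ring
    · filter_upwards [hbd ε hε] with h hh
      have h2 := abs_lt.mp hh
      have : (-f (hmul a h) - -f a - -L h) / dk h 0
          = -((f (hmul a h) - f a - L h) / dk h 0) := by ring
      rw [this]
      linarith [h2.2]
  · rintro ⟨⟨L1, hL1, h1⟩, ⟨L2, hL2, h2⟩⟩
    -- combined eventual bound
    have hev : ∀ ε : ℝ, 0 < ε → ∀ᶠ h in 𝓝[≠] (0 : Heis),
        (L1 h + L2 h) / dk h 0 < 2 * ε := by
      intro ε hε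
      filter_upwards [h1 ε hε, h2 ε hε, self_mem_nhdsWithin] with h H1 H2 hne
      have hd : 0 < dk h 0 := dk_zero_pos hne
      have HA := (lt_div_iff₀ hd).mp H1
      have HB := (lt_div_iff₀ hd).mp H2
      rw [div_lt_iff₀ hd]
      nlinarith
    -- L1 + L2 vanishes
    have key2 : ∀ p : Heis, p ≠ 0 → L1 p + L2 p ≤ 0 := by
      intro p hp
      have hd : 0 < dk p 0 := dk_zero_pos hp
      have hq : (L1 p + L2 p) / dk p 0 ≤ 0 := by
        by_contra hc
        push_neg at hc
        set q := (L1 p + L2 p) / dk p 0 with hqdef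
        obtain ⟨n, hn⟩ := ((seq_tendsto hp).eventually (hev (q / 4) (by linarith))).exists
        have hr : (0:ℝ) < 1 / (n + 1 : ℝ) := by positivity
        have e1 : L1 (hdil (1 / (n + 1 : ℝ)) p) = (1 / (n + 1 : ℝ)) * L1 p :=
          hL1.2 _ hr p
        have e2 : L2 (hdil (1 / (n + 1 : ℝ)) p) = (1 / (n + 1 : ℝ)) * L2 p :=
          hL2.2 _ hr p
        have e3 : dk (hdil (1 / (n + 1 : ℝ)) p) 0 = (1 / (n + 1 : ℝ)) * dk p 0 := by
          rw [dk_zero, dk_zero, knorm_dil hr]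
        rw [e1, e2, e3, ← mul_add, mul_div_mul_left _ _ hr.ne'] at hn
        rw [← hqdef] at hn
        linarith
      have hmul0 : (L1 p + L2 p) / dk p 0 * dk p 0 = L1 p + L2 p :=
        div_mul_cancel₀ _ hd.ne'
      nlinarith
    have keyz : ∀ p : Heis, L1 p + L2 p = 0 := by
      intro p
      by_cases hp : p = 0
      · rw [hp, gl_zero hL1, gl_zero hL2]; ring
      · have ha := key2 p hp
        have hip : hinv p ≠ 0 := by
          have he : hinv p = -p := rfl
          rw [he]; simpa using hp
        have hb := key2 (hinv p) hip
        rw [gl_hinv hL1, gl_hinv hL2] at hb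
        linarith
    refine ⟨L1, hL1, ?_⟩
    rw [Metric.tendsto_nhds]
    intro ε hε
    filter_upwards [h1 (ε / 2) (by linarith), h2 (ε / 2) (by linarith),
      self_mem_nhdsWithin] with h H1 H2 hne
    have hd : 0 < dk h 0 := dk_zero_pos hne
    rw [Real.dist_eq, sub_zero, abs_lt]
    have hz := keyz h
    have HA := (lt_div_iff₀ hd).mp H1
    have HB := (lt_div_iff₀ hd).mp H2
    constructor
    · rw [lt_div_iff₀ hd]; nlinarith
    · rw [div_lt_iff₀ hd]; nlinarith
end
end

section
/- Let Z ⊆ R be a set of Lebesgue measure zero. Then there exists a Lipschitz function f : R → R which is subdifferentiable at no point of Z. -/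
open Filter Topology MeasureTheory
open scoped NNReal ENNReal

noncomputable section

/-!
Cover `Z` by open sets `G₀ ⊇ G₁ ⊇ ⋯` such that, around each `a ∈ Z`, `Gₙ₊₁` fills at most an
eighth of the largest ball about `a` inside `Gₙ`; the radii of these balls then tend to `0`.
The set `E = ⋃ₘ (G₂ₘ \ G₂ₘ₊₁)` has density at most `1/8` in the balls of odd index and at least
`7/8` in those of even index. Hence the primitive of `𝟙_E`, which is `1`-Lipschitz, has at every
`a ∈ Z` right difference quotients `≤ 1/4` and left difference quotients `≥ 3/4` at arbitrarily
small scales, whereas a subgradient `ℓ` at `a` would force `3/4 ≤ ℓ ≤ 1/4`.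
-/

open Metric Set

theorem not_rSubdiffAt_of_frequently {F : ℝ → ℝ} {a α β : ℝ} (hαβ : α < β)
    (hright : ∃ᶠ t in 𝓝[>] 0, F (a + t) - F a ≤ α * t)
    (hleft : ∃ᶠ t in 𝓝[>] 0, β * t ≤ F a - F (a - t)) : ¬ RSubdiffAt F a := by
  rintro ⟨l, hl⟩
  have hε := hl ((β - α) / 2) (by linarith)
  have hneg : Tendsto (fun t : ℝ => -t) (𝓝[>] 0) (𝓝[≠] 0) := by
    simpa using (tendsto_neg_nhdsGT_neg (a := (0:ℝ))).mono_right (nhdsLT_le_nhdsNE 0)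
  obtain ⟨t, ht_le, ht_pos, ht_sub⟩ :=
    (hright.and_eventually (eventually_mem_nhdsWithin.and (nhdsGT_le_nhdsNE 0 hε))).exists
  obtain ⟨s, hs_le, hs_pos, hs_sub⟩ :=
    (hleft.and_eventually (eventually_mem_nhdsWithin.and (hneg.eventually hε))).exists
  simp only [mem_Ioi] at ht_pos hs_pos
  rw [abs_of_pos ht_pos, lt_div_iff₀ ht_pos] at ht_sub
  rw [abs_neg, abs_of_pos hs_pos, lt_div_iff₀ hs_pos, ← sub_eq_add_neg] at hs_sub
  nlinarith

def indicatorPrimitive (E : Set ℝ) (x : ℝ) : ℝ := ∫ t in (0 : ℝ)..x, E.indicator 1 t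

namespace indicatorPrimitive

variable {E : Set ℝ}

theorem sub_eq_integral (hE : MeasurableSet E) (x y : ℝ) :
    indicatorPrimitive E y - indicatorPrimitive E x = ∫ t in x..y, E.indicator 1 t := by
  have hint (z : ℝ) : IntervalIntegrable (E.indicator 1) volume 0 z :=
    have h1 : IntervalIntegrable (1 : ℝ → ℝ) volume 0 z := intervalIntegrable_const
    ⟨h1.1.indicator hE, h1.2.indicator hE⟩
  exact intervalIntegral.integral_interval_sub_left (hint y) (hint x)

theorem sub_eq_measureReal (hE : MeasurableSet E) {x y : ℝ} (hxy : x ≤ y) :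
    indicatorPrimitive E y - indicatorPrimitive E x = volume.real (E ∩ Ioc x y) := by
  rw [sub_eq_integral hE, intervalIntegral.integral_of_le hxy, integral_indicator_one hE,
    measureReal_restrict_apply hE]

theorem sub_eq_sub_measureReal_diff (hE : MeasurableSet E) {x y : ℝ} (hxy : x ≤ y) :
    indicatorPrimitive E y - indicatorPrimitive E x = (y - x) - volume.real (Ioc x y \ E) := by
  rw [sub_eq_measureReal hE hxy, ← Real.volume_real_Ioc_of_le hxy,
    ← measureReal_inter_add_sdiff (s := Ioc x y) hE measure_Ioc_lt_top.ne, inter_comm]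
  ring

theorem lipschitzWith (hE : MeasurableSet E) : LipschitzWith 1 (indicatorPrimitive E) := by
  refine LipschitzWith.of_dist_le_mul fun x y => ?_
  rw [dist_comm, Real.dist_eq, sub_eq_integral hE, NNReal.coe_one, dist_comm, Real.dist_eq,
    ← Real.norm_eq_abs]
  refine intervalIntegral.norm_integral_le_of_norm_le_const (f := E.indicator (1 : ℝ → ℝ))
    fun t _ => ?_
  by_cases ht : t ∈ E <;> simp [ht]

theorem sub_le_of_volume_inter_ball_le (hE : MeasurableSet E) {a ρ t c : ℝ} (ht : 0 ≤ t)
    (htρ : t < ρ) (hc : 0 ≤ c) (h : volume (E ∩ ball a ρ) ≤ ENNReal.ofReal c) :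
    indicatorPrimitive E (a + t) - indicatorPrimitive E a ≤ c := by
  rw [sub_eq_measureReal hE (by linarith)]
  refine ENNReal.toReal_le_of_le_ofReal hc ((measure_mono (inter_subset_inter_right _ ?_)).trans h)
  intro x hx
  rw [mem_ball, Real.dist_eq, abs_lt]
  constructor <;> linarith [hx.1, hx.2]

theorem le_sub_of_volume_ball_diff_le (hE : MeasurableSet E) {a ρ t c : ℝ} (ht : 0 ≤ t)
    (htρ : t < ρ) (hc : 0 ≤ c) (h : volume (ball a ρ \ E) ≤ ENNReal.ofReal c) :
    t - c ≤ indicatorPrimitive E a - indicatorPrimitive E (a - t) := by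
  rw [sub_eq_sub_measureReal_diff hE (by linarith), sub_sub_cancel]
  gcongr
  refine ENNReal.toReal_le_of_le_ofReal hc ((measure_mono (sdiff_subset_sdiff_left ?_)).trans h)
  intro x hx
  rw [mem_ball, Real.dist_eq, abs_lt]
  constructor <;> linarith [hx.1, hx.2]

end indicatorPrimitive

theorem exists_mem_Ioo_half_pow {r : ℝ} (hr : 0 < r) (hr_le : r ≤ 1) :
    ∃ j : ℕ, r ∈ Ioo ((1 / 2) ^ j / 4) (2 * (1 / 2) ^ j) := by
  obtain ⟨j, hj, hj'⟩ := exists_nat_pow_near (one_le_inv₀ hr |>.2 hr_le) one_lt_two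
  rw [le_inv_comm₀ (by positivity) hr] at hj
  rw [inv_lt_comm₀ hr (by positivity), pow_succ, mul_inv] at hj'
  have : (0 : ℝ) < (2 ^ j)⁻¹ := by positivity
  refine ⟨j, ?_, ?_⟩ <;> simp only [one_div, inv_pow] <;> linarith

/- Sort the points by `r = infDist · Uᶜ` into the open shells `S j` on which `r ≍ 2⁻ʲ`, and cover
`Z ∩ S j` by an open set of measure `4⁻ʲ / 128`. Since `r < 2 r a` on `ball a (r a)`, this ball
only meets shells with `2⁻ʲ < 8 r a`, so the measures add up to at most `r a / 8`. -/
theorem exists_isOpen_sparse_subset {Z U : Set ℝ} (hZ : volume Z = 0) (hU : IsOpen U)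
    (hZU : Z ⊆ U) (hU_vol : volume U ≤ 1) :
    ∃ V, IsOpen V ∧ Z ⊆ V ∧ V ⊆ U ∧
      ∀ a ∈ Z, volume (V ∩ ball a (infDist a Uᶜ)) ≤ ENNReal.ofReal (infDist a Uᶜ / 8) := by
  set r : ℝ → ℝ := fun x => infDist x Uᶜ
  set S : ℕ → Set ℝ := fun j => r ⁻¹' Ioo ((1 / 2) ^ j / 4) (2 * (1 / 2) ^ j)
  have hO (j : ℕ) : ∃ O ⊇ Z ∩ S j, IsOpen O ∧ volume O < ENNReal.ofReal ((1 / 4) ^ j / 128) :=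
    exists_isOpen_lt_of_lt _ _ (by rw [measure_mono_null inter_subset_left hZ]; simp)
  choose O hZO hO_open hO_vol using hO
  refine ⟨⋃ j, O j ∩ S j,
    isOpen_iUnion fun j => (hO_open j).inter (isOpen_Ioo.preimage (continuous_infDist_pt _)),
    fun a ha => ?_, fun x hx => ?_, fun a ha => ?_⟩
  · have hUc : Uᶜ.Nonempty := by
      refine nonempty_compl.2 fun hUu => ?_
      simp [hUu] at hU_vol
    have hr_pos : 0 < r a :=
      (hU.isClosed_compl.notMem_iff_infDist_pos hUc).1 (not_not.2 (hZU ha))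
    have hr_le : 2 * r a ≤ 1 := by
      have := (measure_mono (ball_infDist_compl_subset (x := a) (s := U))).trans hU_vol
      rwa [Real.volume_ball, ENNReal.ofReal_le_one] at this
    obtain ⟨j, hmem⟩ := exists_mem_Ioo_half_pow hr_pos (by linarith)
    exact mem_iUnion.2 ⟨j, hZO j ⟨ha, hmem⟩, hmem⟩
  · obtain ⟨j, -, hxS⟩ := mem_iUnion.1 hx
    by_contra hxU
    have : (1 / 2 : ℝ) ^ j / 4 < 0 := infDist_zero_of_mem (mem_compl hxU) ▸ hxS.1
    have : (0 : ℝ) < (1 / 2) ^ j / 4 := by positivity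
    linarith
  · have hterm (j : ℕ) :
        volume (O j ∩ S j ∩ ball a (r a)) ≤ ENNReal.ofReal (r a / 16 * (1 / 2) ^ j) := by
      rcases (O j ∩ S j ∩ ball a (r a)).eq_empty_or_nonempty with h | ⟨x, ⟨-, hxS⟩, hxa⟩
      · simp [h]
      have hx : r x < 2 * r a := by
        have := infDist_le_infDist_add_dist (x := x) (y := a) (s := Uᶜ)
        rw [mem_ball] at hxa
        linarith
      have hj : (1 / 2 : ℝ) ^ j < 8 * r a := by linarith [hxS.1]
      refine (measure_mono (inter_subset_left.trans inter_subset_left)).trans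
        ((hO_vol j).le.trans (ENNReal.ofReal_le_ofReal ?_))
      rw [show (1 / 4 : ℝ) ^ j = (1 / 2) ^ j * (1 / 2) ^ j by rw [← mul_pow]; norm_num]
      nlinarith [pow_pos (by norm_num : (0 : ℝ) < 1 / 2) j]
    calc volume ((⋃ j, O j ∩ S j) ∩ ball a (r a))
        ≤ ∑' j, volume (O j ∩ S j ∩ ball a (r a)) := by
          rw [iUnion_inter]; exact measure_iUnion_le _
      _ ≤ ∑' j, ENNReal.ofReal (r a / 16 * (1 / 2) ^ j) := ENNReal.tsum_le_tsum hterm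
      _ = ENNReal.ofReal (r a / 8) := by
          rw [← ENNReal.ofReal_tsum_of_nonneg (fun j => ?_) (summable_geometric_two.mul_left _),
            tsum_mul_left, tsum_geometric_two]
          · ring_nf
          · have := infDist_nonneg (x := a) (s := Uᶜ)
            positivity

def evenLayers (G : ℕ → Set ℝ) : Set ℝ := ⋃ m, G (2 * m) \ G (2 * m + 1)

theorem evenLayers_inter_subset {G : ℕ → Set ℝ} (hG : Antitone G) (n : ℕ) :
    evenLayers G ∩ G (2 * n + 1) ⊆ G (2 * n + 2) := by
  rintro x ⟨hxE, hx⟩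
  obtain ⟨m, hxm, hxm'⟩ := mem_iUnion.1 hxE
  refine hG ?_ hxm
  by_contra! hmn
  exact hxm' (hG (by omega : 2 * m + 1 ≤ 2 * n + 1) hx)

theorem sdiff_evenLayers_subset {G : ℕ → Set ℝ} (n : ℕ) :
    G (2 * n) \ evenLayers G ⊆ G (2 * n + 1) := fun x hx => by
  by_contra hx'
  exact hx.2 (mem_iUnion.2 ⟨n, hx.1, hx'⟩)

structure IsSparseChain (Z : Set ℝ) (G : ℕ → Set ℝ) : Prop where
  isOpen (n : ℕ) : IsOpen (G n)
  subset (n : ℕ) : Z ⊆ G n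
  compl_nonempty (n : ℕ) : (G n)ᶜ.Nonempty
  antitone : Antitone G
  sparse (n : ℕ) : ∀ a ∈ Z,
    volume (G (n + 1) ∩ ball a (infDist a (G n)ᶜ)) ≤ ENNReal.ofReal (infDist a (G n)ᶜ / 8)

theorem exists_isSparseChain {Z : Set ℝ} (hZ : volume Z = 0) : ∃ G, IsSparseChain Z G := by
  let Admissible := {U : Set ℝ // IsOpen U ∧ Z ⊆ U ∧ volume U ≤ 1}
  have hnext (U : Admissible) : ∃ V : Admissible, V.1 ⊆ U.1 ∧ ∀ a ∈ Z,
      volume (V.1 ∩ ball a (infDist a U.1ᶜ)) ≤ ENNReal.ofReal (infDist a U.1ᶜ / 8) := by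
    obtain ⟨V, hV, hZV, hVU, hsparse⟩ := exists_isOpen_sparse_subset hZ U.2.1 U.2.2.1 U.2.2.2
    exact ⟨⟨V, hV, hZV, (measure_mono hVU).trans U.2.2.2⟩, hVU, hsparse⟩
  choose next hnext using hnext
  obtain ⟨U₀, hZU₀, hU₀, hU₀_vol⟩ :=
    exists_isOpen_lt_of_lt Z 1 (by rw [hZ]; exact one_pos)
  let G (n : ℕ) : Admissible := next^[n] ⟨U₀, hU₀, hZU₀, hU₀_vol.le⟩
  have hG_succ (n : ℕ) : G (n + 1) = next (G n) := Function.iterate_succ_apply' _ _ _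
  refine ⟨fun n => (G n).1, fun n => (G n).2.1, fun n => (G n).2.2.1, fun n => ?_,
    antitone_nat_of_succ_le fun n => hG_succ n ▸ (hnext (G n)).1,
    fun n => hG_succ n ▸ (hnext (G n)).2⟩
  refine nonempty_compl.2 fun h => ?_
  simpa [h] using (G n).2.2.2

namespace IsSparseChain

variable {Z : Set ℝ} {G : ℕ → Set ℝ} {a : ℝ}

theorem measurableSet_evenLayers (hG : IsSparseChain Z G) : MeasurableSet (evenLayers G) :=
  .iUnion fun _ => (hG.isOpen _).measurableSet.diff (hG.isOpen _).measurableSet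

theorem infDist_pos (hG : IsSparseChain Z G) (ha : a ∈ Z) (n : ℕ) : 0 < infDist a (G n)ᶜ :=
  ((hG.isOpen n).isClosed_compl.notMem_iff_infDist_pos (hG.compl_nonempty n)).1
    (not_not.2 (hG.subset n ha))

theorem infDist_antitone (hG : IsSparseChain Z G) : Antitone fun n => infDist a (G n)ᶜ :=
  fun _ _ hmn =>
    infDist_le_infDist_of_subset (compl_subset_compl.2 (hG.antitone hmn)) (hG.compl_nonempty _)

theorem infDist_succ_le (hG : IsSparseChain Z G) (ha : a ∈ Z) (n : ℕ) :
    infDist a (G (n + 1))ᶜ ≤ 1 / 16 * infDist a (G n)ᶜ := by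
  have hsub : ball a (infDist a (G (n + 1))ᶜ) ⊆ G (n + 1) ∩ ball a (infDist a (G n)ᶜ) :=
    subset_inter ball_infDist_compl_subset
      (ball_subset_ball (hG.infDist_antitone n.le_succ))
  have := (measure_mono hsub).trans (hG.sparse n a ha)
  rw [Real.volume_ball, ENNReal.ofReal_le_ofReal_iff (by linarith [hG.infDist_pos ha n])] at this
  linarith

theorem tendsto_half_infDist (hG : IsSparseChain Z G) (ha : a ∈ Z) :
    Tendsto (fun n => infDist a (G n)ᶜ / 2) atTop (𝓝[>] 0) := by
  refine tendsto_nhdsWithin_iff.2 ⟨?_, .of_forall fun n => half_pos (hG.infDist_pos ha n)⟩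
  have hgeom : Tendsto (fun n : ℕ => (1 / 16 : ℝ) ^ n * infDist a (G 0)ᶜ / 2) atTop (𝓝 0) := by
    simpa using ((tendsto_pow_atTop_nhds_zero_of_lt_one (r := (1 / 16 : ℝ)) (by norm_num)
      (by norm_num)).mul_const (infDist a (G 0)ᶜ)).div_const 2
  refine squeeze_zero (fun n => (half_pos (hG.infDist_pos ha n)).le) (fun n => ?_) hgeom
  have := le_geom (u := fun n => infDist a (G n)ᶜ) (by norm_num) n
    fun k _ => hG.infDist_succ_le ha k
  linarith

theorem frequently_sub_le (hG : IsSparseChain Z G) (ha : a ∈ Z) :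
    ∃ᶠ t in 𝓝[>] 0, indicatorPrimitive (evenLayers G) (a + t)
      - indicatorPrimitive (evenLayers G) a ≤ 1 / 4 * t := by
  have hodd : StrictMono fun n : ℕ => 2 * n + 1 := fun _ _ h => by dsimp only; omega
  refine ((hG.tendsto_half_infDist ha).comp hodd.tendsto_atTop).frequently
    (.of_forall fun n => ?_)
  have hr := hG.infDist_pos ha (2 * n + 1)
  have hsub : evenLayers G ∩ ball a (infDist a (G (2 * n + 1))ᶜ) ⊆
      G (2 * n + 1 + 1) ∩ ball a (infDist a (G (2 * n + 1))ᶜ) := fun x hx =>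
    ⟨evenLayers_inter_subset hG.antitone n ⟨hx.1, ball_infDist_compl_subset hx.2⟩, hx.2⟩
  have := indicatorPrimitive.sub_le_of_volume_inter_ball_le hG.measurableSet_evenLayers
    (half_pos hr).le (half_lt_self hr) (by positivity)
    ((measure_mono hsub).trans (hG.sparse _ a ha))
  simp only [Function.comp_apply]
  linarith

theorem frequently_le_sub (hG : IsSparseChain Z G) (ha : a ∈ Z) :
    ∃ᶠ t in 𝓝[>] 0, 3 / 4 * t ≤
      indicatorPrimitive (evenLayers G) a - indicatorPrimitive (evenLayers G) (a - t) := by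
  have heven : StrictMono fun n : ℕ => 2 * n := fun _ _ h => by dsimp only; omega
  refine ((hG.tendsto_half_infDist ha).comp heven.tendsto_atTop).frequently
    (.of_forall fun n => ?_)
  have hr := hG.infDist_pos ha (2 * n)
  have hsub : ball a (infDist a (G (2 * n))ᶜ) \ evenLayers G ⊆
      G (2 * n + 1) ∩ ball a (infDist a (G (2 * n))ᶜ) := fun x hx =>
    ⟨sdiff_evenLayers_subset n ⟨ball_infDist_compl_subset hx.1, hx.2⟩, hx.1⟩
  have := indicatorPrimitive.le_sub_of_volume_ball_diff_le hG.measurableSet_evenLayers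
    (half_pos hr).le (half_lt_self hr) (by positivity)
    ((measure_mono hsub).trans (hG.sparse _ a ha))
  simp only [Function.comp_apply]
  linarith

end IsSparseChain

/-- For every Lebesgue null `Z ⊆ ℝ` there is a Lipschitz `f : ℝ → ℝ` subdifferentiable at
no point of `Z`. -/
theorem stmt_13 (Z : Set ℝ) (hZ : volume Z = 0) :
    ∃ f : ℝ → ℝ, (∃ K : ℝ≥0, LipschitzWith K f) ∧ ∀ a ∈ Z, ¬ RSubdiffAt f a := by
  obtain ⟨G, hG⟩ := exists_isSparseChain hZ
  refine ⟨indicatorPrimitive (evenLayers G),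
    ⟨1, indicatorPrimitive.lipschitzWith hG.measurableSet_evenLayers⟩, fun a ha => ?_⟩
  exact not_rSubdiffAt_of_frequently (by norm_num) (hG.frequently_sub_le ha)
    (hG.frequently_le_sub ha)
end
end
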